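/- arXiv:2507.12178 — 6 statements merged into one kernel-verified Lean document; each statement's English description precedes it below -/
import Mathlib

section
/- A monomial f in the polynomial ring k[x_1,...,x_n] belongs to the integral closure of a monomial ideal I if and only if there exist a positive integer r and monomials f_1,...,f_r in I such that f^r = f_1 · f_2 ··· f_r. -/
open MvPolynomial

variable {k : Type} [Field k] {n : ℕ}

/-- An ideal of `k[x₁,…,xₙ]` is a *monomial ideal* if it is generated by monomials. -/
def IsMonomialIdeal (I : Ideal (MvPolynomial (Fin n) k)) : Prop :=
  ∃ G : Set (Fin n →₀ ℕ), I = Ideal.span ((fun A => (monomial A (1 : k))) '' G)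

/-- The integral closure of an ideal `I`, as a set: all elements `f` satisfying an
equation `f^r + a₁ f^{r-1} + ⋯ + a_r = 0` with `aᵢ ∈ Iⁱ`. -/
def intCl (I : Ideal (MvPolynomial (Fin n) k)) : Set (MvPolynomial (Fin n) k) :=
  {f | ∃ r : ℕ, 0 < r ∧ ∃ a : ℕ → MvPolynomial (Fin n) k,
    (∀ i, 1 ≤ i → i ≤ r → a i ∈ I ^ i) ∧
    f ^ r + ∑ i ∈ Finset.Icc 1 r, a i * f ^ (r - i) = 0}

/-- The exponent vectors of the minimal monomial generators of a set `T` of polynomials: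
those `A` with `x^A ∈ T` minimal in the componentwise (divisibility) order. -/
def minExps (T : Set (MvPolynomial (Fin n) k)) : Set (Fin n →₀ ℕ) :=
  {A | monomial A (1 : k) ∈ T ∧
    ∀ B : Fin n →₀ ℕ, monomial B (1 : k) ∈ T → B ≤ A → B = A}

lemma prod_monomial_one {m : ℕ} (g : Fin m → (Fin n →₀ ℕ)) :
    ∏ j, monomial (g j) (1 : k) = monomial (∑ j, g j) 1 := by
  induction m with
  | zero => simp
  | succ m ih =>
    rw [Fin.prod_univ_succ, Fin.sum_univ_succ, ih, monomial_mul, one_mul]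

lemma support_mem_pow {G : Set (Fin n →₀ ℕ)} :
    ∀ (i : ℕ) (p : MvPolynomial (Fin n) k),
      p ∈ (Ideal.span ((fun A => monomial A (1 : k)) '' G)) ^ i →
      ∀ d ∈ p.support, ∃ f : Fin i → (Fin n →₀ ℕ), (∀ j, f j ∈ G) ∧ ∑ j, f j ≤ d := by
  intro i
  induction i with
  | zero => intro p _ d _; exact ⟨Fin.elim0, fun j => j.elim0, by simp⟩
  | succ i ih =>
    intro p hp
    rw [pow_succ] at hp
    refine Submodule.mul_induction_on hp ?_ ?_
    · intro a ha b hb d hd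
      classical
      obtain ⟨u, hu, v, hv, rfl⟩ := Finset.mem_add.mp (support_mul a b hd)
      obtain ⟨f, hfG, hf⟩ := ih a ha u hu
      obtain ⟨s, hsG, hs⟩ := mem_ideal_span_monomial_image.mp hb v hv
      refine ⟨Fin.cons s f, fun j => Fin.cases hsG (fun j => hfG j) j, ?_⟩
      rw [Fin.sum_cons, add_comm u v]
      exact add_le_add hs hf
    · intro x y hx hy d hd
      classical
      rcases Finset.mem_union.mp (MvPolynomial.support_add hd) with h | h
      exacts [hx d h, hy d h]

/-- A monomial `x^A` lies in the integral closure of a monomial ideal `I`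
iff there are `r ≥ 1` and monomials `x^{f 1}, …, x^{f r} ∈ I` with `(x^A)^r = ∏ x^{f i}`. -/
theorem monomial_mem_intCl_iff (I : Ideal (MvPolynomial (Fin n) k))
    (hI : IsMonomialIdeal I) (A : Fin n →₀ ℕ) :
    monomial A (1 : k) ∈ intCl I ↔
      ∃ r : ℕ, 0 < r ∧ ∃ f : Fin r → (Fin n →₀ ℕ),
        (∀ i, monomial (f i) (1 : k) ∈ I) ∧
        (monomial A (1 : k)) ^ r = ∏ i, monomial (f i) (1 : k) := by
  obtain ⟨G, rfl⟩ := hI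
  set I := Ideal.span ((fun A => (monomial A (1 : k))) '' G) with hIdef
  constructor
  · rintro ⟨r, hr, a, ha, heq⟩
    -- consider the coefficient of r • A
    have h1 : coeff (r • A) ((monomial A (1 : k)) ^ r) = 1 := by
      rw [monomial_pow, one_pow, coeff_monomial, if_pos rfl]
    have h2 : coeff (r • A) (∑ i ∈ Finset.Icc 1 r, a i * (monomial A (1:k)) ^ (r - i)) ≠ 0 := by
      intro h0
      have := congrArg (coeff (r • A)) heq
      rw [coeff_add, h1, h0, coeff_zero] at this
      norm_num at this
    rw [coeff_sum] at h2
    obtain ⟨i, hi, hne⟩ := Finset.exists_ne_zero_of_sum_ne_zero h2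
    rw [Finset.mem_Icc] at hi
    have hsplit : (r : ℕ) • A = i • A + (r - i) • A := by
      rw [← add_smul, Nat.add_sub_cancel' hi.2]
    have hcoeff : coeff (i • A) (a i) ≠ 0 := by
      rw [monomial_pow, one_pow, coeff_mul_monomial'] at hne
      by_cases hle : (r - i) • A ≤ r • A
      · rw [if_pos hle, mul_one] at hne
        have : r • A - (r - i) • A = i • A := by
          rw [hsplit, add_tsub_cancel_right]
        rwa [this] at hne
      · rw [if_neg hle] at hne; exact absurd rfl hne
    obtain ⟨f, hfG, hf⟩ := support_mem_pow i (a i) (ha i hi.1 hi.2)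
      (i • A) (mem_support_iff.mpr hcoeff)
    obtain ⟨i', rfl⟩ : ∃ i', i = i' + 1 := ⟨i - 1, (Nat.succ_pred_eq_of_pos hi.1).symm⟩
    set B : Fin n →₀ ℕ := (i' + 1) • A - ∑ j, f j with hB
    refine ⟨i' + 1, Nat.succ_pos _, Fin.cons (f 0 + B) (fun j => f j.succ), ?_, ?_⟩
    · intro j
      refine Fin.cases ?_ (fun j => ?_) j
      · rw [Fin.cons_zero]
        have hm : monomial (f 0 + B) (1:k) = monomial (f 0) 1 * monomial B 1 := by
          rw [monomial_mul, mul_one]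
        rw [hm]
        exact Ideal.mul_mem_right _ _ (Ideal.subset_span ⟨f 0, hfG 0, rfl⟩)
      · rw [Fin.cons_succ]
        exact Ideal.subset_span ⟨f j.succ, hfG j.succ, rfl⟩
    · rw [prod_monomial_one, monomial_pow, one_pow]
      congr 1
      rw [Fin.sum_cons, add_assoc, add_comm B, ← add_assoc, ← Fin.sum_univ_succ]
      rw [hB, add_tsub_cancel_of_le hf]
  · rintro ⟨r, hr, f, hfI, hfeq⟩
    have hprod : (∏ i, monomial (f i) (1 : k)) ∈ I ^ r := by
      have h := Ideal.prod_mem_prod (s := Finset.univ) (I := fun _ : Fin r => I)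
        (x := fun i => monomial (f i) (1 : k)) (fun i _ => hfI i)
      simpa [Finset.prod_const, Fintype.card_fin] using h
    refine ⟨r, hr, fun j => if j = r then -(∏ i, monomial (f i) (1 : k)) else 0, ?_, ?_⟩
    · intro i h1 h2
      dsimp only
      by_cases hir : i = r
      · subst hir; rw [if_pos rfl]; exact neg_mem hprod
      · rw [if_neg hir]; exact zero_mem _
    · rw [Finset.sum_eq_single_of_mem r (Finset.mem_Icc.mpr ⟨hr, le_rfl⟩)]
      · dsimp only
        rw [if_pos rfl, Nat.sub_self, pow_zero, mul_one, hfeq, add_neg_cancel]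
      · intro b _ hb
        dsimp only
        rw [if_neg hb, zero_mul]
end

section
/- The integral closure of a monomial ideal in a polynomial ring over a field is again a monomial ideal. -/
open MvPolynomial

variable {k : Type} [Field k] {n : ℕ}

/-! Over an infinite field the rescalings `xᵢ ↦ tᵢ xᵢ` map a monomial ideal `I` into itself, hence
preserve its integral closure, and their linear combinations isolate any single term of a
polynomial. As the integral closure is an ideal (determinant trick: `f` is integral over `I` iff
`f N ≤ I N` for some nonzero ideal `N`), every term of an element of `Ī` lies in `Ī`. Finally a
monomial `x^A` is integral over `I` iff `x^(mA) ∈ I^m` for some `m > 0`, a condition that does not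
see the coefficient field, so finite fields are handled by passing to the algebraic closure. -/

namespace MvPolynomial

section ScaleVars

variable {σ R : Type*} [CommSemiring R]

noncomputable def scaleVars (t : σ → R) : MvPolynomial σ R →ₐ[R] MvPolynomial σ R :=
  aeval fun i => C (t i) * X i

theorem scaleVars_monomial (t : σ → R) (A : σ →₀ ℕ) (a : R) :
    scaleVars t (monomial A a) = monomial A (eval t (monomial A 1) * a) := by
  rw [scaleVars, aeval_monomial, eval_monomial, monomial_eq]
  simp only [mul_pow, Finsupp.prod_mul, ← map_pow]
  rw [← map_finsuppProd, algebraMap_eq, one_mul, C_mul]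
  ring

theorem coeff_scaleVars (t : σ → R) (A : σ →₀ ℕ) (p : MvPolynomial σ R) :
    coeff A (scaleVars t p) = eval t (monomial A 1) * coeff A p := by
  classical
  induction p using MvPolynomial.induction_on' with
  | monomial B b =>
    rw [scaleVars_monomial, coeff_monomial, coeff_monomial]
    split_ifs with h
    · rw [h]
    · rw [mul_zero]
  | add p q hp hq => rw [map_add, coeff_add, coeff_add, hp, hq, mul_add]

theorem monomial_coeff_mem_of_forall_scaleVars_mem {F : Type*} [Field F] [Infinite F]
    {V : Submodule F (MvPolynomial σ F)} (hV : ∀ t p, p ∈ V → scaleVars t p ∈ V)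
    {p : MvPolynomial σ F} (hp : p ∈ V) (A : σ →₀ ℕ) : monomial A (coeff A p) ∈ V := by
  classical
  induction h : p.support.card using Nat.strong_induction_on generalizing p with
  | _ N ih =>
  by_cases hB : ∃ B ∈ p.support, B ≠ A
  swap
  · push Not at hB
    convert hp
    ext C
    rw [coeff_monomial]
    split_ifs with hC
    · rw [hC]
    · exact (notMem_support_iff.mp fun hC' => hC (hB C hC').symm).symm
  obtain ⟨B, hB, hBA⟩ := hB
  obtain ⟨t, ht⟩ : ∃ t : σ → F, eval t (monomial A 1) ≠ eval t (monomial B 1) := by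
    by_contra! h
    exact hBA (monomial_left_injective one_ne_zero (MvPolynomial.funext h)).symm
  -- Subtracting a multiple of `p` from a rescaling of `p` kills the term at `B` but not at `A`.
  set q := scaleVars t p - eval t (monomial B 1) • p
  have hq : q ∈ V := V.sub_mem (hV t p hp) (V.smul_mem _ hp)
  have hcoeff : ∀ C, coeff C q = (eval t (monomial C 1) - eval t (monomial B 1)) * coeff C p := by
    intro C
    rw [coeff_sub, coeff_smul, coeff_scaleVars, smul_eq_mul, sub_mul]
  have hsupp : q.support ⊆ p.support.erase B := by
    intro C hC
    rw [mem_support_iff, hcoeff] at hC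
    refine Finset.mem_erase.mpr ⟨fun hCB => ?_, mem_support_iff.mpr (right_ne_zero_of_mul hC)⟩
    rw [hCB, sub_self, zero_mul] at hC
    exact hC rfl
  have hlt : q.support.card < N :=
    h ▸ (Finset.card_le_card hsupp).trans_lt (Finset.card_erase_lt_of_mem hB)
  have hqA := V.smul_mem (eval t (monomial A 1) - eval t (monomial B 1))⁻¹ (ih _ hlt hq rfl)
  rwa [hcoeff, smul_monomial, smul_eq_mul, inv_mul_cancel_left₀ (sub_ne_zero.mpr ht)] at hqA

end ScaleVars

theorem monomial_one_mem_span_monomial_image_iff {σ R : Type*} [CommSemiring R]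
    [Nontrivial R] {A : σ →₀ ℕ} {G : Set (σ →₀ ℕ)} :
    monomial A (1 : R) ∈ Ideal.span ((fun B => monomial B (1 : R)) '' G) ↔ ∃ B ∈ G, B ≤ A := by
  classical
  simp [mem_ideal_span_monomial_image, support_monomial]

end MvPolynomial

namespace IsMonomialIdeal

variable {I J : Ideal (MvPolynomial (Fin n) k)}

theorem monomial_mem_of_mem_support (hI : IsMonomialIdeal I) {f : MvPolynomial (Fin n) k}
    (hf : f ∈ I) {A : Fin n →₀ ℕ} (hA : A ∈ f.support) : monomial A (1 : k) ∈ I := by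
  obtain ⟨G, rfl⟩ := hI
  exact monomial_one_mem_span_monomial_image_iff.mpr (mem_ideal_span_monomial_image.mp hf A hA)

open scoped Pointwise in
theorem mul (hI : IsMonomialIdeal I) (hJ : IsMonomialIdeal J) : IsMonomialIdeal (I * J) := by
  obtain ⟨G, rfl⟩ := hI
  obtain ⟨H, rfl⟩ := hJ
  refine ⟨G + H, ?_⟩
  rw [Ideal.span_mul_span']
  congr 1
  ext p
  simp only [Set.mem_mul, Set.mem_add, Set.mem_image]
  constructor
  · rintro ⟨_, ⟨A, hA, rfl⟩, _, ⟨B, hB, rfl⟩, rfl⟩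
    exact ⟨A + B, ⟨A, hA, B, hB, rfl⟩, by rw [monomial_mul, one_mul]⟩
  · rintro ⟨_, ⟨A, hA, B, hB, rfl⟩, rfl⟩
    exact ⟨_, ⟨A, hA, rfl⟩, _, ⟨B, hB, rfl⟩, by rw [monomial_mul, one_mul]⟩

theorem pow (hI : IsMonomialIdeal I) (m : ℕ) : IsMonomialIdeal (I ^ m) := by
  induction m with
  | zero => exact ⟨{0}, by simp⟩
  | succ m ih => exact pow_succ I m ▸ ih.mul hI

theorem map {K : Type} [Field K] (hI : IsMonomialIdeal I) (ρ : k →+* K) :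
    IsMonomialIdeal (I.map (MvPolynomial.map ρ)) := by
  obtain ⟨G, rfl⟩ := hI
  exact ⟨G, by rw [Ideal.map_span, Set.image_image]; simp only [map_monomial, map_one]⟩

theorem monomial_mem_map_iff {K : Type} [Field K] (hI : IsMonomialIdeal I) (ρ : k →+* K)
    {A : Fin n →₀ ℕ} : monomial A (1 : K) ∈ I.map (MvPolynomial.map ρ) ↔ monomial A (1 : k) ∈ I := by
  obtain ⟨G, rfl⟩ := hI
  rw [Ideal.map_span, Set.image_image]
  simp only [map_monomial, map_one, monomial_one_mem_span_monomial_image_iff]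

theorem map_scaleVars_le (hI : IsMonomialIdeal I) (t : Fin n → k) : I.map (scaleVars t) ≤ I := by
  obtain ⟨G, rfl⟩ := hI
  rw [Ideal.map_span, Ideal.span_le]
  rintro _ ⟨_, ⟨A, hA, rfl⟩, rfl⟩
  rw [scaleVars_monomial, ← C_mul_monomial]
  exact Ideal.mul_mem_left _ _ (Ideal.subset_span ⟨A, hA, rfl⟩)

end IsMonomialIdeal

theorem Ideal.add_pow_succ_le {R : Type*} [CommSemiring R] (I K : Ideal R) (m : ℕ) :
    (I + K) ^ (m + 1) ≤ I * (I + K) ^ m + K ^ (m + 1) := by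
  induction m with
  | zero => simp
  | succ m ih =>
    rw [pow_succ, mul_add]
    refine sup_le (le_sup_of_le_left (by rw [mul_comm])) ?_
    calc (I + K) ^ (m + 1) * K ≤ (I * (I + K) ^ m + K ^ (m + 1)) * K := Ideal.mul_mono_left ih
      _ = I * ((I + K) ^ m * K) + K ^ (m + 2) := by ring
      _ ≤ I * (I + K) ^ (m + 1) + K ^ (m + 2) :=
        add_le_add (Ideal.mul_mono_right (pow_succ (I + K) m ▸ Ideal.mul_mono_right le_sup_right))
          le_rfl

section IntegralClosure

variable {I : Ideal (MvPolynomial (Fin n) k)} {f : MvPolynomial (Fin n) k}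

theorem mem_intCl_of_pow_mem_pow {m : ℕ} (hm : 0 < m) (h : f ^ m ∈ I ^ m) : f ∈ intCl I := by
  refine ⟨m, hm, Pi.single m (-f ^ m), fun i _ _ => ?_, ?_⟩
  · rcases eq_or_ne i m with rfl | hi
    · simpa using neg_mem h
    · simp [Pi.single_eq_of_ne hi]
  · rw [Finset.sum_eq_single_of_mem m (Finset.mem_Icc.mpr ⟨hm, le_rfl⟩)]
    · simp
    · intro i _ hi
      simp [Pi.single_eq_of_ne hi]

theorem map_mem_intCl {K : Type} [Field K] {F : Type*}
    [FunLike F (MvPolynomial (Fin n) k) (MvPolynomial (Fin n) K)]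
    [RingHomClass F (MvPolynomial (Fin n) k) (MvPolynomial (Fin n) K)] (φ : F)
    {J : Ideal (MvPolynomial (Fin n) K)} (hIJ : I.map φ ≤ J) (hf : f ∈ intCl I) :
    φ f ∈ intCl J := by
  obtain ⟨r, hr, a, ha, heq⟩ := hf
  refine ⟨r, hr, fun i => φ (a i), fun i h1 h2 => ?_, by simpa using congrArg φ heq⟩
  exact Ideal.pow_right_mono hIJ i (Ideal.map_pow φ I i ▸ Ideal.mem_map_of_mem φ (ha i h1 h2))

theorem mem_intCl_of_monic {p : Polynomial (MvPolynomial (Fin n) k)} (hp : p.Monic)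
    (hdeg : 0 < p.natDegree) (hcoeff : ∀ j, p.coeff j ∈ I ^ (p.natDegree - j))
    (hroot : p.eval f = 0) : f ∈ intCl I := by
  set r := p.natDegree
  refine ⟨r, hdeg, fun i => p.coeff (r - i), fun i _ hi => ?_, ?_⟩
  · simpa [Nat.sub_sub_self hi] using hcoeff (r - i)
  rw [Polynomial.eval_eq_sum_range, Finset.sum_range_succ, hp.coeff_natDegree, one_mul,
    add_comm] at hroot
  rw [← hroot]
  congr 1
  refine Finset.sum_nbij' (r - ·) (r - ·) ?_ ?_ ?_ ?_ ?_ <;> intro i hi <;>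
    simp only [Finset.mem_Icc, Finset.mem_range] at hi ⊢ <;> omega

theorem mem_intCl_of_mul_le (N : Ideal (MvPolynomial (Fin n) k)) (hN : N ≠ ⊥)
    (h : Ideal.span {f} * N ≤ I * N) : f ∈ intCl I := by
  set φ := algebraMap (MvPolynomial (Fin n) k) (Module.End (MvPolynomial (Fin n) k) N) f
  have hrange : LinearMap.range φ ≤ I • ⊤ := by
    rintro _ ⟨z, rfl⟩
    rw [Submodule.mem_smul_top_iff]
    exact h (Ideal.mul_mem_mul (Ideal.mem_span_singleton_self f) z.2)
  obtain ⟨p, hp, -, hcoeff, hφ⟩ :=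
    φ.exists_monic_and_natDegree_eq_and_coeff_mem_pow_and_aeval_eq_zero _ I hrange
  obtain ⟨z, hz, hz0⟩ := Submodule.exists_mem_ne_zero_of_ne_bot hN
  have hroot : p.eval f = 0 := by
    rw [Polynomial.aeval_algebraMap_apply] at hφ
    have := LinearMap.congr_fun hφ ⟨z, hz⟩
    rw [Module.algebraMap_end_apply, LinearMap.zero_apply, smul_eq_zero] at this
    exact this.resolve_right fun h0 => hz0 (congrArg Subtype.val h0)
  refine mem_intCl_of_monic hp (Nat.pos_of_ne_zero fun h0 => ?_) hcoeff hroot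
  rw [hp.natDegree_eq_zero.mp h0, Polynomial.eval_one] at hroot
  exact one_ne_zero hroot

theorem exists_mul_le_of_mem_intCl (hf : f ∈ intCl I) :
    ∃ N : Ideal (MvPolynomial (Fin n) k), N ≠ ⊥ ∧ Ideal.span {f} * N ≤ I * N := by
  obtain ⟨r, hr, a, ha, heq⟩ := hf
  rcases eq_or_ne f 0 with rfl | hf0
  · exact ⟨⊤, top_ne_bot, by simp⟩
  -- `N = (I + (f))^(r-1)`: the equation puts `f^r` in `I N`, and `(I + (f))^r ≤ I N + (f^r)`.
  set K := Ideal.span {f}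
  set N := (I + K) ^ (r - 1)
  have hfr : f ^ r ∈ I * N := by
    rw [show f ^ r = -∑ i ∈ Finset.Icc 1 r, a i * f ^ (r - i) by linear_combination heq]
    refine neg_mem (Ideal.sum_mem _ fun i hi => ?_)
    obtain ⟨hi1, hir⟩ := Finset.mem_Icc.mp hi
    obtain ⟨j, rfl⟩ := Nat.exists_eq_add_of_le' hi1
    have hle : I ^ (j + 1) * K ^ (r - (j + 1)) ≤ I * N := by
      rw [pow_succ', mul_assoc, show N = (I + K) ^ j * (I + K) ^ (r - (j + 1)) by
        rw [← pow_add, show j + (r - (j + 1)) = r - 1 by omega]]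
      exact Ideal.mul_mono_right
        (Ideal.mul_mono (Ideal.pow_right_mono le_sup_left j) (Ideal.pow_right_mono le_sup_right _))
    exact hle (Ideal.mul_mem_mul (ha _ hi1 hir) (Ideal.pow_mem_pow (Ideal.mem_span_singleton_self f) _))
  refine ⟨N, fun hN => pow_ne_zero (r - 1) hf0 ?_, ?_⟩
  · exact (Submodule.eq_bot_iff _).mp hN _
      (Ideal.pow_mem_pow (Ideal.mem_sup_right (Ideal.mem_span_singleton_self f)) _)
  calc K * N ≤ (I + K) ^ (r - 1 + 1) := by
        rw [pow_succ']
        exact Ideal.mul_mono_left le_sup_right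
    _ ≤ I * N + K ^ (r - 1 + 1) := Ideal.add_pow_succ_le I K (r - 1)
    _ ≤ I * N := by
        rw [Nat.sub_add_cancel hr, Ideal.span_singleton_pow]
        exact sup_le le_rfl ((Ideal.span_singleton_le_iff_mem _).mpr hfr)

theorem mem_intCl_iff :
    f ∈ intCl I ↔ ∃ N : Ideal (MvPolynomial (Fin n) k), N ≠ ⊥ ∧ Ideal.span {f} * N ≤ I * N :=
  ⟨exists_mul_le_of_mem_intCl, fun ⟨N, hN, h⟩ => mem_intCl_of_mul_le N hN h⟩

end IntegralClosure

def intClIdeal (I : Ideal (MvPolynomial (Fin n) k)) : Ideal (MvPolynomial (Fin n) k) where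
  carrier := intCl I
  zero_mem' := mem_intCl_of_pow_mem_pow one_pos (by simp)
  add_mem' {f g} hf hg := by
    obtain ⟨N₁, hN₁, h₁⟩ := mem_intCl_iff.mp hf
    obtain ⟨N₂, hN₂, h₂⟩ := mem_intCl_iff.mp hg
    refine mem_intCl_iff.mpr ⟨N₁ * N₂, mul_ne_zero hN₁ hN₂, ?_⟩
    calc Ideal.span {f + g} * (N₁ * N₂)
        ≤ (Ideal.span {f} + Ideal.span {g}) * (N₁ * N₂) :=
          Ideal.mul_mono_left ((Ideal.span_singleton_le_iff_mem _).mpr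
            (Submodule.add_mem_sup (Ideal.mem_span_singleton_self f)
              (Ideal.mem_span_singleton_self g)))
      _ = Ideal.span {f} * N₁ * N₂ + Ideal.span {g} * N₂ * N₁ := by ring
      _ ≤ I * N₁ * N₂ + I * N₂ * N₁ :=
          add_le_add (Ideal.mul_mono_left h₁) (Ideal.mul_mono_left h₂)
      _ = I * (N₁ * N₂) := by rw [mul_right_comm I N₂, ← mul_assoc, Submodule.add_eq_sup, sup_idem]
  smul_mem' c f hf := by
    obtain ⟨N, hN, h⟩ := mem_intCl_iff.mp hf
    refine mem_intCl_iff.mpr ⟨N, hN, ?_⟩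
    calc Ideal.span {c • f} * N = Ideal.span {c} * (Ideal.span {f} * N) := by
          rw [smul_eq_mul, ← Ideal.span_singleton_mul_span_singleton, mul_assoc]
      _ ≤ Ideal.span {c} * (I * N) := Ideal.mul_mono_right h
      _ ≤ I * N := Ideal.mul_le_right

section Monomial

variable {I : Ideal (MvPolynomial (Fin n) k)} {f : MvPolynomial (Fin n) k} {A : Fin n →₀ ℕ}

theorem exists_pow_mem_pow_of_monomial_mem_intCl (hI : IsMonomialIdeal I)
    (h : monomial A (1 : k) ∈ intCl I) : ∃ m, 0 < m ∧ monomial (m • A) (1 : k) ∈ I ^ m := by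
  obtain ⟨r, hr, a, ha, heq⟩ := h
  have hterm : ∀ i ∈ Finset.Icc 1 r,
      coeff (r • A) (a i * monomial A (1 : k) ^ (r - i)) = coeff (i • A) (a i) := by
    intro i hi
    rw [monomial_pow, one_pow, ← Nat.add_sub_cancel' (Finset.mem_Icc.mp hi).2, add_smul,
      Nat.add_sub_cancel_left, coeff_mul_monomial, mul_one]
  have hco : 1 + ∑ i ∈ Finset.Icc 1 r, coeff (i • A) (a i) = 0 := by
    have := congrArg (coeff (r • A)) heq
    rwa [coeff_add, coeff_sum, Finset.sum_congr rfl hterm, monomial_pow, one_pow, coeff_monomial,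
      if_pos rfl, coeff_zero] at this
  obtain ⟨i, hi, hne⟩ : ∃ i ∈ Finset.Icc 1 r, coeff (i • A) (a i) ≠ 0 :=
    Finset.exists_ne_zero_of_sum_ne_zero fun h0 => one_ne_zero (by rwa [h0, add_zero] at hco)
  obtain ⟨hi1, hir⟩ := Finset.mem_Icc.mp hi
  exact ⟨i, hi1, (hI.pow i).monomial_mem_of_mem_support (ha i hi1 hir) (mem_support_iff.mpr hne)⟩

theorem monomial_mem_intCl_of_mem_support [Infinite k] (hI : IsMonomialIdeal I)
    (hf : f ∈ intCl I) (hA : A ∈ f.support) : monomial A (1 : k) ∈ intCl I := by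
  have hterm : monomial A (coeff A f) ∈ intClIdeal I :=
    monomial_coeff_mem_of_forall_scaleVars_mem (V := (intClIdeal I).restrictScalars k)
      (fun t _ hp => map_mem_intCl (scaleVars t) (hI.map_scaleVars_le t) hp) hf A
  have := (intClIdeal I).mul_mem_left (C (coeff A f)⁻¹) hterm
  rwa [C_mul_monomial, inv_mul_cancel₀ (mem_support_iff.mp hA)] at this

theorem exists_pow_mem_pow_of_mem_support (hI : IsMonomialIdeal I) (hf : f ∈ intCl I)
    (hA : A ∈ f.support) : ∃ m, 0 < m ∧ monomial (m • A) (1 : k) ∈ I ^ m := by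
  let ρ := algebraMap k (AlgebraicClosure k)
  have hfK : map ρ f ∈ intCl (I.map (map ρ)) := map_mem_intCl (map ρ) le_rfl hf
  have hAK : A ∈ (map ρ f).support := by rwa [support_map_of_injective f ρ.injective]
  obtain ⟨m, hm, hmA⟩ := exists_pow_mem_pow_of_monomial_mem_intCl (hI.map ρ)
    (monomial_mem_intCl_of_mem_support (hI.map ρ) hfK hAK)
  rw [← Ideal.map_pow, (hI.pow m).monomial_mem_map_iff] at hmA
  exact ⟨m, hm, hmA⟩

end Monomial

/-- The integral closure of a monomial ideal is again a monomial ideal. -/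
theorem intCl_isMonomialIdeal (I : Ideal (MvPolynomial (Fin n) k))
    (hI : IsMonomialIdeal I) :
    ∃ J : Ideal (MvPolynomial (Fin n) k),
      (J : Set (MvPolynomial (Fin n) k)) = intCl I ∧ IsMonomialIdeal J := by
  let M : Set (Fin n →₀ ℕ) := {A | ∃ m, 0 < m ∧ monomial (m • A) (1 : k) ∈ I ^ m}
  refine ⟨Ideal.span ((fun A => monomial A (1 : k)) '' M), Set.Subset.antisymm ?_ ?_, M, rfl⟩
  · refine (Ideal.span_le (I := intClIdeal I)).mpr ?_
    rintro _ ⟨A, ⟨m, hm, hA⟩, rfl⟩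
    exact mem_intCl_of_pow_mem_pow hm (by rwa [monomial_pow, one_pow])
  · exact fun f hf => mem_ideal_span_monomial_image.mpr fun A hA =>
      ⟨A, exists_pow_mem_pow_of_mem_support hI hf hA, le_rfl⟩
end

section
/- For a monomial ideal I in k[x_1,...,x_n], a monomial x^A (with exponent vector A ∈ ℤ_{≥0}^n) lies in the integral closure Ī of I if and only if A belongs to the convex hull (in ℝ^n) of the exponent set of I, i.e., there exist exponent vectors A_1,...,A_r of monomials in I and nonnegative rationals λ_1,...,λ_r summing to 1 with Σ λ_i A_i ≤ A componentwise. -/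
/-!
If `x^A` satisfies an integral equation of degree `r` over `I`, comparing coefficients of
`x^{rA}` shows that `x^{iA}` occurs in some element of `I^i` with `0 < i`. As `I^i` is again a
monomial ideal, `iA` then dominates a sum of `i` exponents of monomials of `I`, and weights `1/i`
give the convex combination. Conversely, clearing the denominators of the weights by a common
`q` exhibits `x^{qA}` as a multiple of a product of `q` monomials of `I`, so `(x^A)^q ∈ I^q`,
which is an integral equation.
-/

open MvPolynomial

variable {k : Type} [Field k] {n : ℕ}

section MonomialIdeal

variable {σ R : Type*} [CommSemiring R]

theorem span_monomial_pow_le (G : Set (σ →₀ ℕ)) (i : ℕ) :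
    Ideal.span ((fun A => monomial A (1 : R)) '' G) ^ i ≤
      Ideal.span ((fun A => monomial A (1 : R)) ''
        {B | ∃ Bs : Fin i → σ →₀ ℕ, (∀ j, Bs j ∈ G) ∧ ∑ j, Bs j = B}) := by
  rw [Ideal.span, Submodule.span_pow]
  refine Submodule.span_mono ?_
  intro _ hx
  obtain ⟨f, rfl⟩ := Set.mem_pow.mp hx
  choose Bs hBs hf using fun j => (f j).2
  refine ⟨∑ j, Bs j, ⟨Bs, hBs, rfl⟩, ?_⟩
  simp [monomial_sum_one, List.prod_ofFn, hf]

theorem exists_sum_le_of_mem_span_monomial_pow {G : Set (σ →₀ ℕ)} {i : ℕ}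
    {p : MvPolynomial σ R} (hp : p ∈ Ideal.span ((fun A => monomial A (1 : R)) '' G) ^ i)
    {B : σ →₀ ℕ} (hB : p.coeff B ≠ 0) :
    ∃ Bs : Fin i → σ →₀ ℕ, (∀ j, Bs j ∈ G) ∧ ∑ j, Bs j ≤ B := by
  obtain ⟨_, ⟨Bs, hBs, rfl⟩, hle⟩ :=
    mem_ideal_span_monomial_image.mp (span_monomial_pow_le G i hp) B (mem_support_iff.mpr hB)
  exact ⟨Bs, hBs, hle⟩

theorem monomial_mem_pow_of_sum_nsmul_le {ι : Type*} {s : Finset ι} {I : Ideal (MvPolynomial σ R)}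
    {As : ι → σ →₀ ℕ} (hAs : ∀ i ∈ s, monomial (As i) (1 : R) ∈ I) (m : ι → ℕ) {B : σ →₀ ℕ}
    (hB : ∑ i ∈ s, m i • As i ≤ B) :
    monomial B (1 : R) ∈ I ^ ∑ i ∈ s, m i := by
  have hprod : monomial (∑ i ∈ s, m i • As i) (1 : R) ∈ I ^ ∑ i ∈ s, m i := by
    rw [monomial_sum_one, ← Finset.prod_pow_eq_pow_sum]
    refine Ideal.prod_mem_prod fun i hi => ?_
    simpa [monomial_pow] using Ideal.pow_mem_pow (hAs i hi) (m i)
  rw [← tsub_add_cancel_of_le hB, ← one_mul (1 : R), ← monomial_mul]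
  exact Ideal.mul_mem_left _ _ hprod

end MonomialIdeal

theorem Finsupp.sum_nsmul_le_nsmul_iff {σ ι : Type*} (s : Finset ι) {q : ℕ} (hq : 0 < q)
    {m : ι → ℕ} {lam : ι → ℚ} (hm : ∀ i, (m i : ℚ) = q * lam i) (As : ι → σ →₀ ℕ)
    (A : σ →₀ ℕ) :
    ∑ i ∈ s, m i • As i ≤ q • A ↔ ∀ c, ∑ i ∈ s, lam i * As i c ≤ A c := by
  refine Finsupp.le_def.trans (forall_congr' fun c => ?_)
  simp only [Finsupp.finsetSum_apply, Finsupp.smul_apply, smul_eq_mul]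
  rw [← Nat.cast_le (α := ℚ)]
  push_cast
  simp only [hm, mul_assoc, ← Finset.mul_sum]
  exact mul_le_mul_iff_right₀ (by positivity)

theorem Rat.exists_nat_mul_eq_nat {ι : Type*} [Fintype ι] (lam : ι → ℚ) (h : ∀ i, 0 ≤ lam i) :
    ∃ q : ℕ, 0 < q ∧ ∃ m : ι → ℕ, ∀ i, (m i : ℚ) = q * lam i := by
  classical
  refine ⟨∏ i, (lam i).den, Finset.prod_pos fun i _ => (lam i).pos,
    fun i => (lam i).num.toNat * ∏ j ∈ Finset.univ.erase i, (lam j).den, fun i => ?_⟩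
  rw [← Finset.mul_prod_erase _ _ (Finset.mem_univ i)]
  have hnum : ((lam i).num.toNat : ℚ) = lam i * (lam i).den := by
    rw [Rat.mul_den_eq_num]
    exact_mod_cast Int.toNat_of_nonneg (Rat.num_nonneg.mpr (h i))
  push_cast
  rw [hnum]
  ring

theorem mem_intCl_of_pow_mem_pow_s2 {I : Ideal (MvPolynomial (Fin n) k)} {f : MvPolynomial (Fin n) k}
    {q : ℕ} (hq : 0 < q) (h : f ^ q ∈ I ^ q) : f ∈ intCl I := by
  refine ⟨q, hq, fun i => if i = q then -f ^ q else 0, fun i _ _ => ?_, ?_⟩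
  · dsimp only
    split_ifs with hi
    · exact neg_mem (hi ▸ h)
    · exact zero_mem _
  · rw [Finset.sum_eq_single_of_mem q (Finset.mem_Icc.mpr ⟨hq, le_rfl⟩) fun i _ hi => by simp [hi]]
    simp

theorem exists_coeff_nsmul_ne_zero_of_monomial_mem_intCl {I : Ideal (MvPolynomial (Fin n) k)}
    {A : Fin n →₀ ℕ} (h : monomial A (1 : k) ∈ intCl I) :
    ∃ i, 0 < i ∧ ∃ p ∈ I ^ i, p.coeff (i • A) ≠ 0 := by
  obtain ⟨r, -, a, ha, heq⟩ := h
  have hcoeff : ∀ i ∈ Finset.Icc 1 r,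
      coeff (r • A) (a i * monomial A (1 : k) ^ (r - i)) = coeff (i • A) (a i) := by
    intro i hi
    rw [monomial_pow, one_pow, ← Nat.add_sub_of_le (Finset.mem_Icc.mp hi).2, add_nsmul,
      Nat.add_sub_cancel_left, coeff_mul_monomial, mul_one]
  have hsum : ∑ i ∈ Finset.Icc 1 r, coeff (i • A) (a i) = -1 := by
    have := congrArg (coeff (r • A)) heq
    rw [coeff_add, coeff_sum, Finset.sum_congr rfl hcoeff, monomial_pow, one_pow, coeff_monomial,
      if_pos rfl, coeff_zero] at this
    linear_combination this
  obtain ⟨i, hi, hne⟩ := Finset.exists_ne_zero_of_sum_ne_zero (hsum ▸ neg_ne_zero.mpr one_ne_zero)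
  obtain ⟨hi1, hir⟩ := Finset.mem_Icc.mp hi
  exact ⟨i, hi1, a i, ha i hi1 hir, hne⟩

/-- For a monomial ideal `I`, a monomial `x^A` lies in the integral closure
of `I` iff `A` lies in the convex hull of the exponent set of `I`, i.e. there are exponent
vectors `As i` of monomials of `I` and nonnegative rationals `lam i` summing to `1` with
`∑ lam i • As i ≼ A` componentwise. -/
theorem monomial_mem_intCl_iff_convex (I : Ideal (MvPolynomial (Fin n) k))
    (hI : IsMonomialIdeal I) (A : Fin n →₀ ℕ) :
    monomial A (1 : k) ∈ intCl I ↔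
      ∃ r : ℕ, 0 < r ∧ ∃ As : Fin r → (Fin n →₀ ℕ), ∃ lam : Fin r → ℚ,
        (∀ i, monomial (As i) (1 : k) ∈ I) ∧ (∀ i, 0 ≤ lam i) ∧ (∑ i, lam i = 1) ∧
        ∀ j : Fin n, (∑ i, lam i * ((As i) j : ℚ)) ≤ (A j : ℚ) := by
  constructor
  · intro h
    obtain ⟨G, rfl⟩ := hI
    obtain ⟨i, hi, p, hp, hpA⟩ := exists_coeff_nsmul_ne_zero_of_monomial_mem_intCl h
    obtain ⟨Bs, hBs, hle⟩ := exists_sum_le_of_mem_span_monomial_pow hp hpA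
    have hi' : (i : ℚ) ≠ 0 := by positivity
    refine ⟨i, hi, Bs, fun _ => (i : ℚ)⁻¹, fun j => Ideal.subset_span ⟨_, hBs j, rfl⟩,
      fun _ => by positivity, by simp [hi'], ?_⟩
    refine (Finsupp.sum_nsmul_le_nsmul_iff _ hi (m := 1) (fun _ => ?_) Bs A).mp (by simpa using hle)
    simp [hi']
  · rintro ⟨r, -, As, lam, hAs, hlam0, hlam1, hle⟩
    obtain ⟨q, hq, m, hm⟩ := Rat.exists_nat_mul_eq_nat lam hlam0
    have hsum : ∑ i, m i = q := by
      exact_mod_cast (by simp [hm, ← Finset.mul_sum, hlam1] : ((∑ i, m i : ℕ) : ℚ) = q)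
    have hpow := monomial_mem_pow_of_sum_nsmul_le (fun i _ => hAs i) m
      ((Finsupp.sum_nsmul_le_nsmul_iff _ hq hm As A).mpr hle)
    rw [hsum, ← one_pow q, ← monomial_pow] at hpow
    exact mem_intCl_of_pow_mem_pow_s2 hq hpow
end

section
/- If I is a monomial ideal of k[x_1,...,x_n] generated by a regular sequence of monomials (a complete intersection monomial ideal), then every minimal monomial generator of I is also a minimal monomial generator of its integral closure Ī; in particular μ(I) ≤ μ(Ī), where μ denotes the minimal number of generators. -/
/-!
If `x^B` is integral over `I = (x^{A_1}, …, x^{A_c})`, comparing the monomial `x^{rB}` with the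
terms of an integral equation of degree `r` shows that `x^{rB}` is divisible by
`x^{(r-j)B}` times a product of `j ≥ 1` generators, so that product divides `x^{jB}`.
If moreover `B ≤ A_i`, then `x^B` only involves variables of `x^{A_i}`, so by coprimality all
`j` generators equal `x^{A_i}`; hence `A_i ≤ B`. The minimal exponents of any set form an
antichain, which is finite by Dickson's lemma, giving the inequality of cardinalities.
-/

open MvPolynomial

variable {k : Type} [Field k] {n : ℕ}

section MonomialIdeal

variable {σ R ι : Type*} [CommSemiring R]

theorem monomial_one_mem_span_monomial_iff [Nontrivial R] {D : σ →₀ ℕ}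
    {S : Set (σ →₀ ℕ)} :
    monomial D (1 : R) ∈ Ideal.span ((fun s => monomial s (1 : R)) '' S) ↔
      ∃ s ∈ S, s ≤ D := by
  classical
  simp [mem_ideal_span_monomial_image, support_monomial]

theorem span_monomial_pow_le_s4 (A : ι → σ →₀ ℕ) (j : ℕ) :
    Ideal.span (Set.range fun i => monomial (A i) (1 : R)) ^ j ≤
      Ideal.span ((fun D => monomial D (1 : R)) ''
        {D | ∃ t : Multiset ι, Multiset.card t = j ∧ (t.map A).sum = D}) := by
  induction j with
  | zero =>
    rw [pow_zero, Ideal.one_eq_top, top_le_iff, Ideal.eq_top_iff_one, one_def]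
    exact Ideal.subset_span ⟨0, ⟨0, by simp⟩, rfl⟩
  | succ j ih =>
    rw [pow_succ]
    refine (Ideal.mul_mono_left ih).trans ?_
    rw [Ideal.span_mul_span']
    apply Ideal.span_mono
    rintro _ ⟨_, ⟨D, ⟨t, rfl, rfl⟩, rfl⟩, _, ⟨i, rfl⟩, rfl⟩
    exact ⟨_, ⟨i ::ₘ t, by simp, rfl⟩, by simp [monomial_mul, add_comm]⟩

end MonomialIdeal

theorem subset_intCl (I : Ideal (MvPolynomial (Fin n) k)) :
    (I : Set (MvPolynomial (Fin n) k)) ⊆ intCl I :=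
  fun f hf => ⟨1, one_pos, fun _ => -f, fun i hi1 hi2 => by
    rw [le_antisymm hi2 hi1, pow_one]; exact I.neg_mem hf, by simp⟩

theorem minExps_isAntichain (T : Set (MvPolynomial (Fin n) k)) :
    IsAntichain (· ≤ ·) (minExps T) :=
  fun _ ha _ hb hne hle => hne (hb.2 _ ha.1 hle)

theorem minExps_finite (T : Set (MvPolynomial (Fin n) k)) : (minExps T).Finite :=
  (minExps_isAntichain T).finite_of_partiallyWellOrderedOn (Set.isPWO_of_wellQuasiOrderedLE _)

theorem minExps_span_monomial_subset (S : Set (Fin n →₀ ℕ)) :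
    minExps (Ideal.span ((fun s => monomial s (1 : k)) '' S) : Set (MvPolynomial (Fin n) k)) ⊆
      S := by
  rintro D ⟨hD, hmin⟩
  obtain ⟨s, hs, hsD⟩ := monomial_one_mem_span_monomial_iff.mp hD
  rwa [← hmin s (Ideal.subset_span ⟨s, hs, rfl⟩) hsD]

theorem exists_sum_le_card_nsmul_of_monomial_mem_intCl {ι : Type*} (A : ι → Fin n →₀ ℕ)
    {B : Fin n →₀ ℕ}
    (hB : monomial B (1 : k) ∈ intCl (Ideal.span (Set.range fun i => monomial (A i) (1 : k)))) :
    ∃ t : Multiset ι, t ≠ 0 ∧ (t.map A).sum ≤ Multiset.card t • B := by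
  obtain ⟨r, -, a, ha, heq⟩ := hB
  -- `J` is generated by the monomials `x^{(r-j)B}` times products of `j ≥ 1` generators,
  -- which contains every term `aⱼ (x^B)^{r-j}` of the integral equation and hence `x^{rB}`.
  set J : Ideal (MvPolynomial (Fin n) k) := Ideal.span ((fun D => monomial D (1 : k)) ''
    {D | ∃ t : Multiset ι, t ≠ 0 ∧ Multiset.card t ≤ r ∧
      D = (t.map A).sum + (r - Multiset.card t) • B})
  have hterm : ∀ i ∈ Finset.Icc 1 r, a i * monomial B (1 : k) ^ (r - i) ∈ J := by
    intro i hi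
    obtain ⟨hi1, hir⟩ := Finset.mem_Icc.mp hi
    have hmul := Ideal.mul_mem_mul (span_monomial_pow_le_s4 A i (ha i hi1 hir))
      (Ideal.mem_span_singleton_self (monomial ((r - i) • B) (1 : k)))
    rw [Ideal.span_mul_span'] at hmul
    rw [monomial_pow, one_pow]
    refine Ideal.span_mono ?_ hmul
    rintro _ ⟨_, ⟨_, ⟨t, rfl, rfl⟩, rfl⟩, _, rfl, rfl⟩
    refine ⟨_, ⟨t, ?_, hir, rfl⟩, by simp [monomial_mul]⟩
    rintro rfl
    simp at hi1
  have hpow : monomial (r • B) (1 : k) ∈ J := by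
    rw [← one_pow r, ← monomial_pow, eq_neg_of_add_eq_zero_left heq]
    exact J.neg_mem (J.sum_mem hterm)
  obtain ⟨_, ⟨t, ht, htr, rfl⟩, hle⟩ := monomial_one_mem_span_monomial_iff.mp hpow
  refine ⟨t, ht, le_of_add_le_add_right (a := (r - Multiset.card t) • B) ?_⟩
  rwa [← add_nsmul, Nat.add_sub_cancel' htr]

section CoprimeExponents

variable {σ ι : Type*} {A : ι → σ →₀ ℕ}

theorem eq_of_mem_of_sum_le_card_nsmul (hA0 : ∀ i, A i ≠ 0)
    (hcop : Pairwise fun i j => Disjoint (A i).support (A j).support)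
    {i₀ : ι} {B : σ →₀ ℕ}
    (hB : B ≤ A i₀) {t : Multiset ι} (hsum : (t.map A).sum ≤ Multiset.card t • B)
    {l : ι} (hl : l ∈ t) : l = i₀ := by
  by_contra hne
  obtain ⟨x, hx⟩ := Finsupp.support_nonempty_iff.mpr (hA0 l)
  have hAx : A i₀ x = 0 := Finsupp.notMem_support_iff.mp (Finset.disjoint_left.mp (hcop hne) hx)
  have hBx : B x = 0 := Nat.eq_zero_of_le_zero (hAx ▸ hB x)
  have hle : A l ≤ Multiset.card t • B :=
    (Multiset.le_sum_of_mem (Multiset.mem_map_of_mem A hl)).trans hsum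
  have := hle x
  simp [hBx, Finsupp.mem_support_iff.mp hx] at this

theorem eq_of_sum_le_card_nsmul (hA0 : ∀ i, A i ≠ 0)
    (hcop : Pairwise fun i j => Disjoint (A i).support (A j).support)
    {i₀ : ι} {B : σ →₀ ℕ}
    (hB : B ≤ A i₀) {t : Multiset ι} (ht : t ≠ 0)
    (hsum : (t.map A).sum ≤ Multiset.card t • B) :
    B = A i₀ := by
  have hrep : t = Multiset.replicate (Multiset.card t) i₀ := Multiset.eq_replicate_card.mpr
    fun _ hl => eq_of_mem_of_sum_le_card_nsmul hA0 hcop hB hsum hl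
  rw [hrep, Multiset.map_replicate, Multiset.sum_replicate, Multiset.card_replicate] at hsum
  have hcard : 0 < Multiset.card t := Multiset.card_pos.mpr ht
  exact le_antisymm hB fun x => Nat.le_of_mul_le_mul_left (hsum x) hcard

end CoprimeExponents

/-- If `I` is generated by a regular sequence of monomials (equivalently,
by nonconstant pairwise coprime monomials), then every minimal monomial generator of `I`
is a minimal monomial generator of the integral closure `Ī`; in particular `μ(I) ≤ μ(Ī)`. -/
theorem minExps_subset_of_completeIntersection {c : ℕ} (A : Fin c → (Fin n →₀ ℕ))
    (hA0 : ∀ i, A i ≠ 0)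
    (hcop : Pairwise fun i j => Disjoint (A i).support (A j).support)
    (I : Ideal (MvPolynomial (Fin n) k))
    (hI : I = Ideal.span (Set.range fun i => monomial (A i) (1 : k))) :
    minExps (I : Set (MvPolynomial (Fin n) k)) ⊆ minExps (intCl I) ∧
      (minExps (I : Set (MvPolynomial (Fin n) k))).ncard ≤ (minExps (intCl I)).ncard := by
  have hIA : I = Ideal.span ((fun D => monomial D (1 : k)) '' Set.range A) := by
    rw [hI, ← Set.range_comp]
    rfl
  have hsub : minExps (I : Set (MvPolynomial (Fin n) k)) ⊆ minExps (intCl I) := by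
    intro E hE
    obtain ⟨i₀, rfl⟩ := minExps_span_monomial_subset _ (hIA ▸ hE)
    refine ⟨subset_intCl I hE.1, fun B hB hle => ?_⟩
    obtain ⟨t, ht, hsum⟩ := exists_sum_le_card_nsmul_of_monomial_mem_intCl A (hI ▸ hB)
    exact eq_of_sum_le_card_nsmul hA0 hcop hle ht hsum
  exact ⟨hsub, Set.ncard_le_ncard hsub (minExps_finite _)⟩
end

section
/- Let I be a monomial ideal of k[x_1,...,x_n] of height 1. Then there exists a variable x_j and a monomial ideal I_1 such that I = x_j · I_1 and the integral closure satisfies Ī = x_j · (integral closure of I_1). -/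
open MvPolynomial

variable {k : Type} [Field k] {n : ℕ}

/-- The height of an ideal: the infimum of the heights of the primes containing it. -/
noncomputable def idealHeight (I : Ideal (MvPolynomial (Fin n) k)) : ℕ∞ :=
  ⨅ p ∈ {q : PrimeSpectrum (MvPolynomial (Fin n) k) | I ≤ q.asIdeal}, Order.height p

/-!
A prime of height at most one containing a nonzero monomial ideal contains some monomial, hence
some variable `x_j`; as `(x_j)` is itself a nonzero prime, the height-one prime is `(x_j)`, so
`x_j` divides every monomial generator. In an equation of integral dependence
`g^r + a₁ g^{r-1} + ⋯ + a_r = 0` over `x_j · I₁` every `aᵢ = x_jⁱ bᵢ` is divisible by `x_j`,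
so the prime `x_j` divides `g`; writing `g = x_j f`, the equation is `x_j^r` times an equation
of integral dependence of `f` over `I₁`.
-/

section Ring

variable {R : Type*} [CommRing R]

lemma pow_add_sum_eq_pow_mul (x f : R) (r : ℕ) (b : ℕ → R) :
    (x * f) ^ r + ∑ i ∈ Finset.Icc 1 r, x ^ i * b i * (x * f) ^ (r - i)
      = x ^ r * (f ^ r + ∑ i ∈ Finset.Icc 1 r, b i * f ^ (r - i)) := by
  rw [mul_add, mul_pow, Finset.mul_sum]
  congr 1
  refine Finset.sum_congr rfl fun i hi => ?_
  obtain ⟨m, rfl⟩ := Nat.exists_eq_add_of_le (Finset.mem_Icc.mp hi).2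
  rw [Nat.add_sub_cancel_left]
  ring

lemma Prime.dvd_of_pow_add_sum_eq_zero {x g : R} (hx : Prime x) {r : ℕ}
    {a : ℕ → R} (ha : ∀ i ∈ Finset.Icc 1 r, x ∣ a i)
    (h : g ^ r + ∑ i ∈ Finset.Icc 1 r, a i * g ^ (r - i) = 0) : x ∣ g := by
  have hgr : g ^ r = -∑ i ∈ Finset.Icc 1 r, a i * g ^ (r - i) := eq_neg_of_add_eq_zero_left h
  refine hx.dvd_of_dvd_pow (n := r) ?_
  rw [hgr, dvd_neg]
  exact Finset.dvd_sum fun i hi => (ha i hi).mul_right _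

lemma PrimeSpectrum.eq_of_le_of_height_le_one [IsDomain R] {p q : PrimeSpectrum R}
    (hp : Order.height p ≤ 1) (hq : q.asIdeal ≠ ⊥) (hqp : q ≤ p) : q = p := by
  refine hqp.eq_of_not_lt fun hlt => ?_
  have hbot : (⟨⊥, Ideal.isPrime_bot⟩ : PrimeSpectrum R) < q :=
    (PrimeSpectrum.asIdeal_lt_asIdeal _ _).mp (bot_lt_iff_ne_bot.mpr hq)
  have hq0 : Order.height q < 1 := Order.height_le_coe_iff.mp (by exact_mod_cast hp) q hlt
  rw [Order.lt_one_iff, Order.height_eq_zero] at hq0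
  exact hq0.not_lt hbot

end Ring

section MvPolynomial

variable {σ R : Type*} [CommRing R]

lemma MvPolynomial.exists_X_mem_of_monomial_mem {p : Ideal (MvPolynomial σ R)} [p.IsPrime]
    {A : σ →₀ ℕ} (h : monomial A (1 : R) ∈ p) : ∃ j, X j ∈ p := by
  rw [monomial_eq, C_1, one_mul, Finsupp.prod, Ideal.IsPrime.prod_mem_iff] at h
  obtain ⟨j, -, hj⟩ := h
  exact ⟨j, Ideal.IsPrime.mem_of_pow_mem ‹_› _ hj⟩

lemma MvPolynomial.span_monomial_eq_span_X_mul (j : σ) {G : Set (σ →₀ ℕ)}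
    (hG : ∀ B ∈ G, B j ≠ 0) :
    Ideal.span ((monomial · (1 : R)) '' G) =
      Ideal.span {X j} *
        Ideal.span ((monomial · (1 : R)) '' ((· - Finsupp.single j 1) '' G)) := by
  rw [Ideal.span_mul_span', Set.singleton_mul, Set.image_image, Set.image_image]
  refine congrArg _ (Set.image_congr fun B hB => ?_)
  rw [X, monomial_mul, one_mul,
    add_tsub_cancel_of_le (Finsupp.single_le_iff.mpr (Nat.one_le_iff_ne_zero.mpr (hG B hB)))]

end MvPolynomial

lemma intCl_span_singleton_mul {x : MvPolynomial (Fin n) k} (hx : Prime x)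
    (J : Ideal (MvPolynomial (Fin n) k)) :
    intCl (Ideal.span {x} * J) = (x * ·) '' intCl J := by
  ext g
  constructor
  · rintro ⟨r, hr, a, ha, heq⟩
    have hpow : ∀ i, ∃ b, 1 ≤ i → i ≤ r → b ∈ J ^ i ∧ x ^ i * b = a i := by
      intro i
      by_cases hi : 1 ≤ i ∧ i ≤ r
      · have := ha i hi.1 hi.2
        rw [mul_pow, Ideal.span_singleton_pow, Ideal.mem_span_singleton_mul] at this
        obtain ⟨b, hb, hab⟩ := this
        exact ⟨b, fun _ _ => ⟨hb, hab⟩⟩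
      · exact ⟨0, fun h1 h2 => absurd ⟨h1, h2⟩ hi⟩
    choose b hb using hpow
    have hsum : ∑ i ∈ Finset.Icc 1 r, a i * g ^ (r - i)
        = ∑ i ∈ Finset.Icc 1 r, x ^ i * b i * g ^ (r - i) :=
      Finset.sum_congr rfl fun i hi => by
        obtain ⟨h1, h2⟩ := Finset.mem_Icc.mp hi
        rw [(hb i h1 h2).2]
    rw [hsum] at heq
    have hxa : ∀ i ∈ Finset.Icc 1 r, x ∣ x ^ i * b i := fun i hi =>
      (dvd_pow_self x (Nat.one_le_iff_ne_zero.mp (Finset.mem_Icc.mp hi).1)).mul_right _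
    obtain ⟨f, rfl⟩ := hx.dvd_of_pow_add_sum_eq_zero hxa heq
    rw [pow_add_sum_eq_pow_mul, mul_eq_zero] at heq
    refine ⟨f, ⟨r, hr, b, fun i h1 h2 => (hb i h1 h2).1, ?_⟩, rfl⟩
    exact heq.resolve_left (pow_ne_zero r hx.ne_zero)
  · rintro ⟨f, ⟨r, hr, b, hb, heq⟩, rfl⟩
    refine ⟨r, hr, fun i => x ^ i * b i, fun i h1 h2 => ?_, ?_⟩
    · rw [mul_pow, Ideal.span_singleton_pow]
      exact Ideal.mem_span_singleton_mul.mpr ⟨b i, hb i h1 h2, rfl⟩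
    · rw [pow_add_sum_eq_pow_mul, heq, mul_zero]

lemma exists_le_height_le_of_idealHeight_le {I : Ideal (MvPolynomial (Fin n) k)} {m : ℕ}
    (h : idealHeight I ≤ m) : ∃ p : PrimeSpectrum (MvPolynomial (Fin n) k),
      I ≤ p.asIdeal ∧ Order.height p ≤ m := by
  have hlt : idealHeight I < (m + 1 : ℕ) := h.trans_lt (by exact_mod_cast Nat.lt_succ_self m)
  simp only [idealHeight, iInf_lt_iff] at hlt
  obtain ⟨p, hIp, hp⟩ := hlt
  exact ⟨p, hIp, Order.le_of_lt_add_one (by exact_mod_cast hp)⟩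

/-- A monomial ideal of height `1` factors as `I = x_j · I₁` for some
variable `x_j` and monomial ideal `I₁`, and the integral closure satisfies
`Ī = x_j · (integral closure of I₁)`. -/
theorem height_one_factor (I : Ideal (MvPolynomial (Fin n) k))
    (hI : IsMonomialIdeal I) (hne : I ≠ ⊥) (hht : idealHeight I = 1) :
    ∃ j : Fin n, ∃ I₁ : Ideal (MvPolynomial (Fin n) k), IsMonomialIdeal I₁ ∧
      I = Ideal.span {X j} * I₁ ∧
      intCl I = (fun f => X j * f) '' intCl I₁ := by
  obtain ⟨G, rfl⟩ := hI
  obtain ⟨p, hIp, hp⟩ := exists_le_height_le_of_idealHeight_le (m := 1) hht.le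
  obtain ⟨A, hA⟩ : G.Nonempty := Set.nonempty_iff_ne_empty.mpr (by rintro rfl; simp at hne)
  obtain ⟨j, hjp⟩ := exists_X_mem_of_monomial_mem (hIp (Ideal.subset_span ⟨A, hA, rfl⟩))
  have hXj : (Ideal.span {(X j : MvPolynomial (Fin n) k)}).IsPrime :=
    (Ideal.span_singleton_prime (X_ne_zero j)).mpr X_prime
  have hpj : Ideal.span {X j} = p.asIdeal := congrArg PrimeSpectrum.asIdeal <|
    PrimeSpectrum.eq_of_le_of_height_le_one (q := ⟨_, hXj⟩) hp
      (by simp) (Ideal.span_le.mpr (Set.singleton_subset_iff.mpr hjp))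
  have hdiv : ∀ B ∈ G, B j ≠ 0 := fun B hB => by
    have hB : monomial B (1 : k) ∈ Ideal.span {X j} :=
      hpj ▸ hIp (Ideal.subset_span ⟨B, hB, rfl⟩)
    simpa using Ideal.mem_span_singleton.mp hB
  have hfactor := span_monomial_eq_span_X_mul (R := k) j hdiv
  exact ⟨j, _, ⟨_, rfl⟩, hfactor, hfactor ▸ intCl_span_singleton_mul X_prime _⟩
end

section
/- If I is a stable monomial ideal of k[x_1,...,x_n], then its integral closure Ī is also a stable monomial ideal. -/
open MvPolynomial

variable {k : Type} [Field k] {n : ℕ}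

/-- A set `T` of polynomials is *stable* if for every monomial `x^A ∈ T`, letting `t` be the
largest index of a variable dividing `x^A`, we have `x_i · x^A / x_t ∈ T` for all `i < t`. -/
def IsStableSet (T : Set (MvPolynomial (Fin n) k)) : Prop :=
  ∀ A : Fin n →₀ ℕ, monomial A (1 : k) ∈ T →
    ∀ t : Fin n, A t ≠ 0 → (∀ s, A s ≠ 0 → s ≤ t) →
      ∀ i, i < t →
        monomial (A + Finsupp.single i 1 - Finsupp.single t 1) (1 : k) ∈ T

/-!
In a Noetherian domain, `f ∈ Ī` iff `c * f ^ m ∈ I ^ m` for some `c ≠ 0` and all `m`: one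
direction is the integral equation read off degree by degree, the other is integrality of `f t`
over the Rees algebra `R[I t]`, which is Noetherian. This description is visibly closed under
addition, and for a monomial ideal `I` it passes to leading monomials (the leading monomial of
`c * f ^ m` lies in the monomial ideal `I ^ m`), so `Ī` is spanned by monomials.

For stability, comparing coefficients of `x^(r A)` in an integral equation of `x^A` over `I` gives
`x^(m A) ∈ I ^ m` for some `m ≥ 1`. Powers of stable monomial ideals are stable, and `m` successive
exchanges `x_t ↦ x_i` turn `x^(m A)` into `(x_i x^A / x_t) ^ m ∈ I ^ m`, whence `x_i x^A / x_t ∈ Ī`.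
-/

open scoped Polynomial

namespace Ideal

variable {R : Type*} [CommRing R]

def IsIntegralElem (I : Ideal R) (f : R) : Prop :=
  ∃ r : ℕ, 0 < r ∧ ∃ a : ℕ → R, (∀ i, 1 ≤ i → i ≤ r → a i ∈ I ^ i) ∧
    f ^ r + ∑ i ∈ Finset.Icc 1 r, a i * f ^ (r - i) = 0

/-- `f` lies here iff `f t` is almost integral (`IsAlmostIntegral`) over the Rees algebra
`R[I t]`. -/
def almostIntegralClosure [IsDomain R] (I : Ideal R) : Ideal R where
  carrier := {f | ∃ c ≠ 0, ∀ m, c * f ^ m ∈ I ^ m}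
  zero_mem' := ⟨1, one_ne_zero, fun m => by cases m <;> simp⟩
  add_mem' := by
    rintro f g ⟨c, hc, hf⟩ ⟨d, hd, hg⟩
    refine ⟨c * d, mul_ne_zero hc hd, fun m => ?_⟩
    rw [add_pow, Finset.mul_sum]
    refine sum_mem _ fun j hj => ?_
    have hjm : j + (m - j) = m := Nat.add_sub_cancel' (Finset.mem_range_succ_iff.1 hj)
    have hmem := mul_mem_mul (hf j) (hg (m - j))
    rw [← pow_add, hjm] at hmem
    have hterm : c * d * (f ^ j * g ^ (m - j) * m.choose j) =
        m.choose j * (c * f ^ j * (d * g ^ (m - j))) := by ring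
    rw [hterm]
    exact mul_mem_left _ _ hmem
  smul_mem' := by
    rintro r f ⟨c, hc, hf⟩
    refine ⟨c, hc, fun m => ?_⟩
    rw [smul_eq_mul, mul_pow, mul_left_comm]
    exact mul_mem_left _ _ (hf m)

theorem IsIntegralElem.mem_almostIntegralClosure [IsDomain R] {I : Ideal R} {f : R}
    (h : I.IsIntegralElem f) : f ∈ I.almostIntegralClosure := by
  obtain ⟨r, hr, a, ha, heq⟩ := h
  by_cases hI : I = ⊥
  · have hterms : ∀ i ∈ Finset.Icc 1 r, a i * f ^ (r - i) = 0 := fun i hi => by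
      obtain ⟨hi1, hir⟩ := Finset.mem_Icc.1 hi
      have hai := ha i hi1 hir
      rw [hI, ← zero_eq_bot, zero_pow (by omega), zero_eq_bot, mem_bot] at hai
      rw [hai, zero_mul]
    rw [Finset.sum_eq_zero hterms, add_zero, pow_eq_zero_iff hr.ne'] at heq
    exact heq ▸ zero_mem _
  obtain ⟨p, hpI, hp0⟩ := Submodule.exists_mem_ne_zero_of_ne_bot hI
  -- `p ^ (r - 1)` handles `M < r`; beyond that the equation writes `f ^ M` via lower powers.
  refine ⟨p ^ (r - 1), pow_ne_zero _ hp0, fun M => ?_⟩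
  induction M using Nat.strong_induction_on with
  | _ M ih =>
    by_cases hM : M ≤ r - 1
    · exact mul_mem_right _ _ (pow_le_pow_right hM (pow_mem_pow hpI _))
    have hfM : f ^ M = ∑ i ∈ Finset.Icc 1 r, -a i * f ^ (M - i) := calc
      f ^ M = f ^ (M - r) * f ^ r := by rw [← pow_add, Nat.sub_add_cancel (by omega)]
      _ = f ^ (M - r) * ∑ i ∈ Finset.Icc 1 r, -a i * f ^ (r - i) := by
        simp only [eq_neg_of_add_eq_zero_left heq, neg_mul, Finset.sum_neg_distrib]
      _ = ∑ i ∈ Finset.Icc 1 r, -a i * f ^ (M - i) := by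
        rw [Finset.mul_sum]
        refine Finset.sum_congr rfl fun i hi => ?_
        rw [mul_left_comm, ← pow_add, (by grind : M - r + (r - i) = M - i)]
    rw [hfM, Finset.mul_sum]
    refine sum_mem _ fun i hi => ?_
    obtain ⟨hi1, hir⟩ := Finset.mem_Icc.1 hi
    have hmem := mul_mem_mul (neg_mem (ha i hi1 hir)) (ih (M - i) (by omega))
    rwa [← pow_add, Nat.add_sub_cancel' (by omega), mul_left_comm] at hmem

theorem isIntegral_monomial_one_of_mem_almostIntegralClosure [IsNoetherianRing R] [IsDomain R]
    {I : Ideal R} {f : R} (h : f ∈ I.almostIntegralClosure) :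
    IsIntegral (reesAlgebra I) (Polynomial.monomial 1 f) := by
  obtain ⟨c, hc, hcf⟩ := h
  refine IsAlmostIntegral.isIntegral_of_nonZeroDivisors_le_comap ?_ fun z hz =>
    mem_nonZeroDivisors_of_ne_zero (by simpa using nonZeroDivisors.ne_zero hz)
  refine ⟨⟨Polynomial.C c, Subalgebra.algebraMap_mem _ c⟩, mem_nonZeroDivisors_of_ne_zero ?_,
    fun m => ⟨⟨Polynomial.monomial m (c * f ^ m), reesAlgebra.monomial_mem.2 (hcf m)⟩, ?_⟩⟩
  · simpa [← Subtype.coe_ne_coe] using hc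
  · simp [Polynomial.monomial_pow, Algebra.smul_def, Polynomial.C_mul_monomial]

theorem isIntegralElem_of_isIntegral_monomial_one [Nontrivial R] {I : Ideal R} {f : R}
    (h : IsIntegral (reesAlgebra I) (Polynomial.monomial 1 f)) : I.IsIntegralElem f := by
  obtain ⟨p, hmonic, hp⟩ := h
  set r := p.natDegree
  have hr : 0 < r := by
    refine Nat.pos_of_ne_zero fun h0 => ?_
    rw [hmonic.natDegree_eq_zero.1 h0, Polynomial.eval₂_one] at hp
    exact one_ne_zero hp
  have hsum : ∑ j ∈ Finset.range (r + 1), (p.coeff j : R[X]).coeff (r - j) * f ^ j = 0 := by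
    have := congrArg (Polynomial.coeff · r) hp
    simp only [Polynomial.eval₂_eq_sum_range, Polynomial.finsetSum_coeff,
      Polynomial.coeff_zero] at this
    rw [← this]
    refine Finset.sum_congr rfl fun j hj => ?_
    rw [Polynomial.monomial_pow, one_mul, ← Polynomial.C_mul_X_pow_eq_monomial, ← mul_assoc,
      Polynomial.coeff_mul_X_pow', if_pos (by simpa [Nat.lt_succ_iff] using hj),
      Polynomial.coeff_mul_C]
    rfl
  refine ⟨r, hr, fun i => (p.coeff (r - i) : R[X]).coeff i,
    fun i _ _ => (mem_reesAlgebra_iff _ _).1 (p.coeff (r - i)).2 i, ?_⟩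
  rw [Finset.sum_range_succ, Nat.sub_self, hmonic.coeff_natDegree] at hsum
  rw [← hsum, add_comm]
  simp only [OneMemClass.coe_one, Polynomial.coeff_one_zero, one_mul]
  congr 1
  refine Finset.sum_nbij' (r - ·) (r - ·) ?_ ?_ ?_ ?_ ?_ <;> intro i hi <;>
    simp only [Finset.mem_Icc, Finset.mem_range] at hi ⊢
  all_goals first | omega | rw [Nat.sub_sub_self hi.2]

theorem isIntegralElem_iff_mem_almostIntegralClosure [IsNoetherianRing R] [IsDomain R]
    {I : Ideal R} {f : R} : I.IsIntegralElem f ↔ f ∈ I.almostIntegralClosure :=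
  ⟨IsIntegralElem.mem_almostIntegralClosure, fun h =>
    isIntegralElem_of_isIntegral_monomial_one
      (isIntegral_monomial_one_of_mem_almostIntegralClosure h)⟩

theorem isIntegralElem_of_pow_mem_pow {I : Ideal R} {f : R} {m : ℕ} (hm : 0 < m)
    (h : f ^ m ∈ I ^ m) : I.IsIntegralElem f := by
  refine ⟨m, hm, fun i => if i = m then -f ^ m else 0, fun i _ _ => ?_, ?_⟩
  · dsimp only
    split_ifs with him
    · subst him
      exact neg_mem h
    · exact zero_mem _
  · simp [ite_mul, Finset.sum_ite_eq', Nat.one_le_iff_ne_zero.2 hm.ne']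

end Ideal

open scoped Pointwise in
theorem span_monomial_mul_span_monomial {σ R : Type*} [CommSemiring R] (G H : Set (σ →₀ ℕ)) :
    Ideal.span ((fun A => monomial A (1 : R)) '' G) *
        Ideal.span ((fun A => monomial A (1 : R)) '' H) =
      Ideal.span ((fun A => monomial A (1 : R)) '' (G + H)) := by
  rw [Ideal.span_mul_span', ← Set.image2_mul, Set.image2_image_left, Set.image2_image_right,
    ← Set.image2_add, Set.image_image2]
  simp only [monomial_mul, one_mul]

theorem monomial_mem_span_monomial_iff {σ R : Type*} [CommSemiring R] [Nontrivial R]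
    {G : Set (σ →₀ ℕ)} {A : σ →₀ ℕ} :
    monomial A (1 : R) ∈ Ideal.span ((fun B => monomial B (1 : R)) '' G) ↔ ∃ B ∈ G, B ≤ A := by
  classical
  simp [mem_ideal_span_monomial_image, support_monomial]

section MonomialIdeal

variable {I J : Ideal (MvPolynomial (Fin n) k)}

theorem isMonomialIdeal_iff :
    IsMonomialIdeal I ↔ ∀ f ∈ I, ∀ A ∈ f.support, monomial A (1 : k) ∈ I := by
  constructor
  · rintro ⟨G, rfl⟩ f hf A hA
    obtain ⟨B, hB, hBA⟩ := mem_ideal_span_monomial_image.1 hf A hA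
    exact monomial_mem_span_monomial_iff.2 ⟨B, hB, hBA⟩
  · intro h
    refine ⟨{A | monomial A (1 : k) ∈ I}, le_antisymm (fun f hf => ?_) (Ideal.span_le.2 ?_)⟩
    · exact mem_ideal_span_monomial_image.2 fun A hA => ⟨A, h f hf A hA, le_rfl⟩
    · rintro _ ⟨A, hA, rfl⟩
      exact hA

open scoped Pointwise in
theorem IsMonomialIdeal.mul_s7 (hI : IsMonomialIdeal I) (hJ : IsMonomialIdeal J) :
    IsMonomialIdeal (I * J) := by
  obtain ⟨G, rfl⟩ := hI
  obtain ⟨H, rfl⟩ := hJ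
  exact ⟨G + H, span_monomial_mul_span_monomial G H⟩

theorem IsMonomialIdeal.pow_s7 (hI : IsMonomialIdeal I) : ∀ m, IsMonomialIdeal (I ^ m)
  | 0 => isMonomialIdeal_iff.2 fun _ _ _ _ => by simp
  | m + 1 => by
    rw [pow_succ]
    exact (hI.pow_s7 m).mul_s7 hI

theorem IsMonomialIdeal.exists_add_eq_of_monomial_mem_mul (hI : IsMonomialIdeal I)
    (hJ : IsMonomialIdeal J) {A : Fin n →₀ ℕ} (h : monomial A (1 : k) ∈ I * J) :
    ∃ P Q, monomial P (1 : k) ∈ I ∧ monomial Q (1 : k) ∈ J ∧ P + Q = A := by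
  obtain ⟨G, rfl⟩ := hI
  obtain ⟨H, rfl⟩ := hJ
  rw [span_monomial_mul_span_monomial, monomial_mem_span_monomial_iff] at h
  obtain ⟨_, ⟨B, hB, C, hC, rfl⟩, hle⟩ := h
  refine ⟨B, A - B, monomial_mem_span_monomial_iff.2 ⟨B, hB, le_rfl⟩,
    monomial_mem_span_monomial_iff.2 ⟨C, hC, le_tsub_of_add_le_left hle⟩,
    add_tsub_cancel_of_le (le_self_add.trans hle)⟩

theorem IsMonomialIdeal.of_monomial_degree_mem (m : MonomialOrder (Fin n))
    (h : ∀ f ∈ I, f ≠ 0 → monomial (m.degree f) (1 : k) ∈ I) : IsMonomialIdeal I := by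
  refine isMonomialIdeal_iff.2 fun f hf => ?_
  induction hN : f.support.card generalizing f with
  | zero => simp_all
  | succ N ih =>
    have hf0 : f ≠ 0 := by
      rintro rfl
      simp at hN
    have hlead : monomial (m.degree f) (1 : k) ∈ I := h f hf hf0
    have hrest : f - m.leadingTerm f ∈ I := by
      refine sub_mem hf ?_
      rw [← m.C_mul_leadingCoeff_monomial_degree]
      exact Ideal.mul_mem_left _ _ hlead
    have hsupp : (f - m.leadingTerm f).support = f.support.erase (m.degree f) := by
      ext A
      by_cases hA : A = m.degree f <;>
        simp [MonomialOrder.leadingTerm, MonomialOrder.leadingCoeff, coeff_monomial, hA, eq_comm]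
    intro A hA
    by_cases hAd : A = m.degree f
    · exact hAd ▸ hlead
    · refine ih _ hrest ?_ A (hsupp ▸ Finset.mem_erase.2 ⟨hAd, hA⟩)
      rw [hsupp, Finset.card_erase_of_mem (m.degree_mem_support hf0), hN, Nat.add_sub_cancel]

theorem IsMonomialIdeal.monomial_degree_mem_almostIntegralClosure (hI : IsMonomialIdeal I)
    (m : MonomialOrder (Fin n)) {f : MvPolynomial (Fin n) k} (hf : f ∈ I.almostIntegralClosure)
    (hf0 : f ≠ 0) : monomial (m.degree f) (1 : k) ∈ I.almostIntegralClosure := by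
  obtain ⟨c, hc, hcf⟩ := hf
  refine ⟨monomial (m.degree c) 1, by simp, fun j => ?_⟩
  have hcfj : c * f ^ j ≠ 0 := mul_ne_zero hc (pow_ne_zero j hf0)
  have hmem := isMonomialIdeal_iff.1 (hI.pow_s7 j) _ (hcf j) _ (m.degree_mem_support hcfj)
  rw [monomial_pow, one_pow, monomial_mul, one_mul]
  rwa [m.degree_mul hc (pow_ne_zero j hf0), m.degree_pow] at hmem

theorem IsMonomialIdeal.almostIntegralClosure (hI : IsMonomialIdeal I) :
    IsMonomialIdeal I.almostIntegralClosure :=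
  of_monomial_degree_mem MonomialOrder.lex fun _ hf hf0 =>
    hI.monomial_degree_mem_almostIntegralClosure _ hf hf0

theorem IsMonomialIdeal.exists_nsmul_mem_pow_of_isIntegralElem
    (hI : IsMonomialIdeal I) {A : Fin n →₀ ℕ}
    (h : I.IsIntegralElem (monomial A (1 : k))) :
    ∃ m, 0 < m ∧ monomial (m • A) (1 : k) ∈ I ^ m := by
  obtain ⟨r, hr, a, ha, heq⟩ := h
  have hterm : ∀ i ∈ Finset.Icc 1 r,
      coeff (r • A) (a i * monomial A (1 : k) ^ (r - i)) = coeff (i • A) (a i) := by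
    intro i hi
    rw [monomial_pow, one_pow, ← Nat.add_sub_cancel' (Finset.mem_Icc.1 hi).2, add_nsmul,
      Nat.add_sub_cancel_left, coeff_mul_monomial, mul_one]
  have hcoeff := congrArg (coeff (r • A)) heq
  rw [coeff_add, coeff_sum, Finset.sum_congr rfl hterm, monomial_pow, one_pow, coeff_monomial,
    if_pos rfl, coeff_zero] at hcoeff
  obtain ⟨i, hi, hne⟩ : ∃ i ∈ Finset.Icc 1 r, coeff (i • A) (a i) ≠ 0 := by
    by_contra! hzero
    rw [Finset.sum_eq_zero hzero, add_zero] at hcoeff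
    exact one_ne_zero hcoeff
  obtain ⟨hi1, hir⟩ := Finset.mem_Icc.1 hi
  exact ⟨i, hi1, isMonomialIdeal_iff.1 (hI.pow_s7 i) _ (ha i hi1 hir) _ (mem_support_iff.2 hne)⟩

end MonomialIdeal

section Stable

open Finsupp (single)

variable {I J : Ideal (MvPolynomial (Fin n) k)}

theorem add_add_single_sub_single {P Q : Fin n →₀ ℕ} {i t : Fin n} (hPt : P t ≠ 0) :
    P + Q + single i 1 - single t 1 = P + single i 1 - single t 1 + Q := by
  rw [tsub_add_eq_add_tsub, add_right_comm]
  exact Finsupp.single_le_iff.2 (by simp; omega)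

theorem IsStableSet.monomial_add_mem_mul (hIs : IsStableSet (I : Set (MvPolynomial (Fin n) k)))
    {P Q : Fin n →₀ ℕ} (hP : monomial P (1 : k) ∈ I) (hQ : monomial Q (1 : k) ∈ J) {i t : Fin n}
    (hPt : P t ≠ 0) (hmax : ∀ s, P s ≠ 0 → s ≤ t) (hit : i < t) :
    monomial (P + Q + single i 1 - single t 1) (1 : k) ∈ I * J := by
  rw [add_add_single_sub_single hPt, ← one_mul (1 : k), ← monomial_mul]
  exact Ideal.mul_mem_mul (hIs P hP t hPt hmax i hit) hQ

theorem IsStableSet.mul_s7 (hI : IsMonomialIdeal I) (hJ : IsMonomialIdeal J)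
    (hIs : IsStableSet (I : Set (MvPolynomial (Fin n) k)))
    (hJs : IsStableSet (J : Set (MvPolynomial (Fin n) k))) :
    IsStableSet (↑(I * J) : Set (MvPolynomial (Fin n) k)) := by
  intro A hA t ht hmax i hit
  obtain ⟨P, Q, hP, hQ, rfl⟩ := hI.exists_add_eq_of_monomial_mem_mul hJ hA
  have hmaxP : ∀ s, P s ≠ 0 → s ≤ t := fun s hs => hmax s (by simp [hs])
  have hmaxQ : ∀ s, Q s ≠ 0 → s ≤ t := fun s hs => hmax s (by simp [hs])
  by_cases hPt : P t = 0
  · rw [SetLike.mem_coe, mul_comm I J, add_comm P Q]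
    exact hJs.monomial_add_mem_mul hQ hP (by simpa [hPt] using ht) hmaxQ hit
  · exact hIs.monomial_add_mem_mul hP hQ hPt hmaxP hit

theorem IsStableSet.pow_s7 (hI : IsMonomialIdeal I)
    (hIs : IsStableSet (I : Set (MvPolynomial (Fin n) k))) :
    ∀ m, IsStableSet (↑(I ^ m) : Set (MvPolynomial (Fin n) k))
  | 0 => fun _ _ _ _ _ _ _ => by simp
  | m + 1 => by
    rw [pow_succ]
    exact (hIs.pow_s7 hI m).mul_s7 (hI.pow_s7 m) hI hIs

theorem IsStableSet.monomial_add_single_sub_single_mem {T : Set (MvPolynomial (Fin n) k)}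
    (hT : IsStableSet T) {B : Fin n →₀ ℕ} (hB : monomial B (1 : k) ∈ T) {i t : Fin n}
    (hmax : ∀ s, B s ≠ 0 → s ≤ t) (hit : i < t) :
    ∀ j ≤ B t, monomial (B + single i j - single t j) (1 : k) ∈ T
  | 0, _ => by simpa using hB
  | j + 1, hj => by
    have hstep := hT _ (hT.monomial_add_single_sub_single_mem hB hmax hit j (by omega)) t
      (by simp [hit.ne]; omega) (fun s hs => ?_) i hit
    · convert hstep using 3
      ext s
      simp only [Finsupp.tsub_apply, Finsupp.add_apply, Finsupp.single_apply]
      split_ifs <;> subst_vars <;> omega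
    · by_cases hsi : s = i
      · exact hsi ▸ hit.le
      · exact hmax s fun h0 => hs (by simp [Finsupp.single_apply, Ne.symm hsi, h0])

theorem nsmul_add_single_sub_single (m : ℕ) (A : Fin n →₀ ℕ) (i t : Fin n) :
    m • A + single i m - single t m = m • (A + single i 1 - single t 1) := by
  ext s
  simp only [Finsupp.tsub_apply, Finsupp.add_apply, Finsupp.smul_apply, Finsupp.single_apply,
    smul_eq_mul, Nat.mul_sub, mul_add]
  split_ifs <;> simp

end Stable

/-- The integral closure of a stable monomial ideal is a stable
monomial ideal. -/
theorem intCl_stable (I : Ideal (MvPolynomial (Fin n) k))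
    (hI : IsMonomialIdeal I) (hst : IsStableSet (I : Set (MvPolynomial (Fin n) k))) :
    (∃ J : Ideal (MvPolynomial (Fin n) k),
        (J : Set (MvPolynomial (Fin n) k)) = intCl I ∧ IsMonomialIdeal J) ∧
      IsStableSet (intCl I) := by
  have hcl : intCl I = I.almostIntegralClosure :=
    Set.ext fun _ => Ideal.isIntegralElem_iff_mem_almostIntegralClosure
  refine ⟨⟨I.almostIntegralClosure, hcl.symm, hI.almostIntegralClosure⟩, ?_⟩
  intro A hA t ht hmax i hit
  obtain ⟨m, hm, hmA⟩ := hI.exists_nsmul_mem_pow_of_isIntegralElem hA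
  have hshift := (hst.pow_s7 hI m).monomial_add_single_sub_single_mem hmA
    (fun s hs => hmax s (right_ne_zero_of_mul hs)) hit m
    (Nat.le_mul_of_pos_right m (Nat.pos_of_ne_zero ht))
  rw [nsmul_add_single_sub_single] at hshift
  exact Ideal.isIntegralElem_of_pow_mem_pow hm (by rwa [monomial_pow, one_pow])
end
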